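/- For all natural numbers m and n: (1/π) ∫₀^π (cos φ)^n · cos(mφ) dφ equals 2^{−n} · C(n, (n+m)/2) if m ≤ n and m ≡ n (mod 2), and equals 0 otherwise. -/

import Mathlib

/-! Since `cos φ · cos ((m + 1) φ) = (cos ((m + 2) φ) + cos (m φ)) / 2`, both sides, viewed as
functions of `(n, m)`, satisfy the Pascal-type recursion `f (n+1) (m+1) = (f n (m+2) + f n m) / 2`
together with `f (n+1) 0 = f n 1`, and they agree at `n = 0` by orthogonality:
`∫₀^π cos (m φ) dφ = π` if `m = 0` and `0` otherwise. -/

open Real intervalIntegral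

noncomputable def cosPowMulCosIntegral (n m : ℕ) : ℝ :=
  ∫ φ in (0:ℝ)..π, cos φ ^ n * cos (m * φ)

theorem integral_cos_nat_mul (m : ℕ) :
    ∫ φ in (0:ℝ)..π, cos (m * φ) = if m = 0 then π else 0 := by
  rcases eq_or_ne m 0 with rfl | hm
  · simp
  · have hm' : (m : ℝ) ≠ 0 := Nat.cast_ne_zero.mpr hm
    rw [if_neg hm, integral_comp_mul_left (fun x => cos x) hm']
    simp [sin_nat_mul_pi]

theorem cos_mul_cos_nat_succ_mul (m : ℕ) (φ : ℝ) :
    cos φ * cos ((m + 1 : ℕ) * φ) = (cos ((m + 2 : ℕ) * φ) + cos (m * φ)) / 2 := by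
  have h₁ : ((m + 2 : ℕ) : ℝ) * φ = (m + 1 : ℕ) * φ + φ := by push_cast; ring
  have h₂ : (m : ℝ) * φ = (m + 1 : ℕ) * φ - φ := by push_cast; ring
  rw [h₁, h₂, cos_add, cos_sub]
  ring

theorem cosPowMulCosIntegral_zero_left (m : ℕ) :
    cosPowMulCosIntegral 0 m = if m = 0 then π else 0 := by
  simpa [cosPowMulCosIntegral] using integral_cos_nat_mul m

theorem cosPowMulCosIntegral_succ_succ (n m : ℕ) :
    cosPowMulCosIntegral (n + 1) (m + 1) =
      (cosPowMulCosIntegral n (m + 2) + cosPowMulCosIntegral n m) / 2 := by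
  have hint : ∀ k : ℕ,
      IntervalIntegrable (fun φ => cos φ ^ n * cos (k * φ)) MeasureTheory.volume 0 π :=
    fun k => by apply Continuous.intervalIntegrable; fun_prop
  have hpoint : ∀ φ : ℝ, cos φ ^ (n + 1) * cos ((m + 1 : ℕ) * φ) =
      (cos φ ^ n * cos ((m + 2 : ℕ) * φ) + cos φ ^ n * cos (m * φ)) / 2 := fun φ => by
    rw [pow_succ, mul_assoc, cos_mul_cos_nat_succ_mul]; ring
  unfold cosPowMulCosIntegral
  simp_rw [hpoint]
  rw [integral_div, integral_add (hint _) (hint _)]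

theorem cosPowMulCosIntegral_succ_zero (n : ℕ) :
    cosPowMulCosIntegral (n + 1) 0 = cosPowMulCosIntegral n 1 := by
  simp [cosPowMulCosIntegral, pow_succ]

noncomputable def cosPowCoeff (n m : ℕ) : ℝ :=
  if m % 2 = n % 2 then (n.choose ((n + m) / 2) : ℝ) / 2 ^ n else 0

theorem cosPowCoeff_zero_left (m : ℕ) : cosPowCoeff 0 m = if m = 0 then 1 else 0 := by
  unfold cosPowCoeff
  rcases Nat.even_or_odd' m with ⟨k, rfl | rfl⟩ <;> rcases k with _ | k <;> simp

theorem cosPowCoeff_succ_succ (n m : ℕ) :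
    cosPowCoeff (n + 1) (m + 1) = (cosPowCoeff n (m + 2) + cosPowCoeff n m) / 2 := by
  unfold cosPowCoeff
  by_cases hp : m % 2 = n % 2
  · rw [if_pos (by omega), if_pos (by omega), if_pos hp]
    have e₁ : (n + 1 + (m + 1)) / 2 = (n + m) / 2 + 1 := by omega
    have e₂ : (n + (m + 2)) / 2 = (n + m) / 2 + 1 := by omega
    rw [e₁, e₂, Nat.choose_succ_succ', pow_succ]
    push_cast
    ring
  · rw [if_neg (by omega), if_neg (by omega), if_neg hp]
    simp

theorem cosPowCoeff_succ_zero (n : ℕ) : cosPowCoeff (n + 1) 0 = cosPowCoeff n 1 := by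
  unfold cosPowCoeff
  rcases Nat.even_or_odd' n with ⟨k, rfl | rfl⟩
  · rw [if_neg (by omega), if_neg (by omega)]
  · rw [if_pos (by omega), if_pos (by omega)]
    have e : (2 * k + 1 + 1 + 0) / 2 = k + 1 := by omega
    rw [e, Nat.choose_succ_succ, ← Nat.choose_symm_half, pow_succ]
    push_cast
    ring

theorem cosPowMulCosIntegral_eq (n m : ℕ) : cosPowMulCosIntegral n m = π * cosPowCoeff n m := by
  induction n generalizing m with
  | zero => rw [cosPowMulCosIntegral_zero_left, cosPowCoeff_zero_left]; split_ifs <;> simp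
  | succ n ih =>
    cases m with
    | zero => rw [cosPowMulCosIntegral_succ_zero, cosPowCoeff_succ_zero, ih]
    | succ m => rw [cosPowMulCosIntegral_succ_succ, cosPowCoeff_succ_succ, ih, ih]; ring

-- The condition `m ≤ n` is automatic for matching parities: otherwise `(n + m) / 2 > n`.
theorem cosPowCoeff_eq (n m : ℕ) :
    cosPowCoeff n m =
      if m ≤ n ∧ m % 2 = n % 2 then (n.choose ((n + m) / 2) : ℝ) / 2 ^ n else 0 := by
  unfold cosPowCoeff
  by_cases hmn : m ≤ n
  · simp [hmn]
  · by_cases hp : m % 2 = n % 2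
    · rw [Nat.choose_eq_zero_of_lt (by omega)]
      simp [hmn]
    · simp [hp]

theorem integral_cos_pow_mul_cos (m n : ℕ) :
    (1 / Real.pi) * ∫ φ in (0:ℝ)..Real.pi, (Real.cos φ) ^ n * Real.cos (m * φ) =
      if m ≤ n ∧ m % 2 = n % 2 then (n.choose ((n + m) / 2) : ℝ) / 2 ^ n else 0 := by
  rw [← cosPowMulCosIntegral, cosPowMulCosIntegral_eq, ← cosPowCoeff_eq, one_div,
    inv_mul_cancel_left₀ pi_ne_zero]
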